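/- Let n be an odd prime and a, b integers such that n divides a + b. Then n^2 divides (a+b)^n - a^n - b^n. -/

import Mathlib

/-!
Since `n ∣ a + b`, the term `(a + b)^n` is divisible by `n^n`, and for odd `n` the rest
`a^n + b^n = a^n - (-b)^n` is divisible by `n^2` by lifting the exponent from `n ∣ a - (-b)`.
-/

section

variable {R : Type*} [CommRing R]

theorem Odd.sq_dvd_pow_add_pow {n : ℕ} (hodd : Odd n) {a b : R} (h : (n : R) ∣ a + b) :
    (n : R) ^ 2 ∣ a ^ n + b ^ n := by
  have key := dvd_sub_pow_of_dvd_sub (p := n) (a := a) (b := -b) (by rwa [sub_neg_eq_add]) 1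
  rwa [pow_one, hodd.neg_pow, sub_neg_eq_add] at key

theorem sq_dvd_pow_of_dvd {n : ℕ} (hn : n ≠ 0) {x : R} (h : (n : R) ∣ x) :
    (n : R) ^ 2 ∣ x ^ n := by
  obtain rfl | hn2 : n = 1 ∨ 2 ≤ n := by omega
  · simp
  · exact (pow_dvd_pow _ hn2).trans (pow_dvd_pow_of_dvd h n)

end

theorem stmt_9_general (n : ℕ) (hodd : Odd n) (a b : ℤ)
    (h : (n : ℤ) ∣ a + b) : (n : ℤ)^2 ∣ (a + b)^n - a^n - b^n := by
  rw [sub_sub]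
  exact dvd_sub (sq_dvd_pow_of_dvd hodd.pos.ne' h) (hodd.sq_dvd_pow_add_pow h)

theorem stmt_9 (n : ℕ) (hn : n.Prime) (hodd : Odd n) (a b : ℤ)
    (h : (n : ℤ) ∣ a + b) : (n : ℤ)^2 ∣ (a + b)^n - a^n - b^n :=
  stmt_9_general n hodd a b h
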